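/- arXiv:2503.18750 — 2 statements merged into one kernel-verified Lean document; each statement's English description precedes it below -/
import Mathlib

section
/- Let X be a type, U ⊆ X a subset, and let a, b, r : X ≃ X be bijections such that a x = x for every x ∉ U, b(U) ∩ U = ∅, and r(U) = U. Then the set of fixed points of r⁻¹ ∘ a ∘ b equals the set of fixed points of r⁻¹ ∘ b. -/
theorem stmt_0 {X : Type*} (U : Set X) (a b r : X ≃ X)
    (ha : ∀ x ∉ U, a x = x)
    (hb : b '' U ∩ U = ∅)
    (hr : r '' U = U) :
    {x | r.symm (a (b x)) = x} = {x | r.symm (b x) = x} := by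
  have haU : ∀ y ∈ U, a y ∈ U := by
    intro y hy
    by_contra h
    have := ha (a y) h
    have h2 : a y = y := a.injective this
    rw [← h2] at hy
    exact h hy
  have hrsymm : ∀ y ∈ U, r.symm y ∈ U := by
    intro y hy
    rw [← hr] at hy
    obtain ⟨z, hz, rfl⟩ := hy
    simpa using hz
  have hbx : ∀ x, x ∈ U → b x ∉ U := by
    intro x hx hbxU
    have : b x ∈ b '' U ∩ U := ⟨⟨x, hx, rfl⟩, hbxU⟩
    simp [hb] at this
  ext x
  simp only [Set.mem_setOf_eq]
  constructor
  · intro h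
    by_cases hU : b x ∈ U
    · exfalso
      have h1 : a (b x) ∈ U := haU _ hU
      have h2 : x ∈ U := h ▸ hrsymm _ h1
      exact hbx x h2 hU
    · rw [ha _ hU] at h; exact h
  · intro h
    by_cases hU : b x ∈ U
    · exfalso
      have h2 : x ∈ U := h ▸ hrsymm _ hU
      exact hbx x h2 hU
    · rw [ha _ hU]; exact h
end

section
/- Let X be a type, U ⊆ X, a, b : X ≃ X bijections with a x = x for all x ∉ U and b(U) ∩ U = ∅, and let (r_η)_{η ∈ ℝ} be a family of bijections of X each satisfying r_η(U) = U. Then the set {η ∈ ℝ : r_η⁻¹ ∘ a ∘ b has a fixed point} equals the set {η ∈ ℝ : r_η⁻¹ ∘ b has a fixed point}. -/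
theorem stmt_1 {X : Type*} (U : Set X) (a b : X ≃ X) (r : ℝ → X ≃ X)
    (ha : ∀ x ∉ U, a x = x)
    (hb : b '' U ∩ U = ∅)
    (hr : ∀ η : ℝ, (r η) '' U = U) :
    {η : ℝ | ∃ x, (r η).symm (a (b x)) = x} = {η : ℝ | ∃ x, (r η).symm (b x) = x} := by
  have haU : ∀ y ∈ U, a y ∈ U := by
    intro y hy
    by_contra h
    have h2 : a (a y) = a y := ha _ h
    have : a y = y := a.injective h2
    exact h (by rw [this]; exact hy)
  have hbU : ∀ x ∈ U, b x ∉ U := by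
    intro x hx hbx
    have : b x ∈ b '' U ∩ U := ⟨⟨x, hx, rfl⟩, hbx⟩
    simp [hb] at this
  have hrU : ∀ η x, (r η) x ∈ U ↔ x ∈ U := by
    intro η x
    constructor
    · intro h
      rw [← hr η] at h
      obtain ⟨y, hy, hxy⟩ := h
      exact ((r η).injective hxy) ▸ hy
    · intro h
      rw [← hr η]; exact ⟨x, h, rfl⟩
  ext η
  simp only [Set.mem_setOf_eq]
  constructor
  · rintro ⟨x, hx⟩
    have hx' : a (b x) = r η x := by
      have := congrArg (r η) hx
      simpa using this
    have hxU : x ∉ U := by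
      intro hxU
      have h1 : r η x ∈ U := (hrU η x).2 hxU
      have h2 : b x ∉ U := hbU x hxU
      rw [ha _ h2] at hx'
      exact h2 (hx' ▸ h1)
    have hbx : b x ∉ U := by
      intro hbx
      have h1 : a (b x) ∈ U := haU _ hbx
      rw [hx'] at h1
      exact hxU ((hrU η x).1 h1)
    exact ⟨x, by rw [ha _ hbx] at hx; exact hx⟩
  · rintro ⟨x, hx⟩
    have hx' : b x = r η x := by
      have := congrArg (r η) hx
      simpa using this
    have hxU : x ∉ U := by
      intro hxU
      exact hbU x hxU (hx' ▸ (hrU η x).2 hxU)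
    have hbx : b x ∉ U := fun h => hxU ((hrU η x).1 (hx' ▸ h))
    exact ⟨x, by rw [ha _ hbx]; exact hx⟩
end
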